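/- arXiv:1902.01690 — 5 statements merged into one kernel-verified Lean document; each statement's English description precedes it below -/
import Mathlib

section
/- Let (K,d) be a nonempty compact metric space, g : K → K continuous, φ : K → ℝ continuous, p ∈ K with g^T(p) = p for some integer T ≥ 1, and δ > 0. Assume that for every x ∈ K there exists 0 ≤ i < T such that |φ(g^j(x)) − φ(g^{i+j}(p))| ≤ δ for every j ≥ 0. For n ≥ 1 and ε > 0 let r_n(ε) be the minimal cardinality of an (n,ε)-spanning set for K, and let Q_n(ε) be the infimum of ∑_{x∈E} exp(S_nφ(x)) over all finite (n,ε)-spanning sets E for K. Then for every ε > 0: limsup_{n→∞} (1/n)·log Q_n(ε) ≥ limsup_{n→∞} (1/n)·log r_n(ε) + (1/T)·∑_{j=0}^{T−1} φ(g^j(p)) − δ. -/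
/-!
Along the periodic orbit of `p` the Birkhoff sums of `φ` grow like `n` times the orbit average,
up to a bounded error. Since every orbit `δ`-shadows a shift of that orbit, every Birkhoff sum
`S_n φ(x)` is at least `n (S_T φ(p)/T - δ) - C`. Hence each term of a spanning sum is at least
`exp (n (S_T φ(p)/T - δ) - C)`, so `Q_n(ε) ≥ r_n(ε) exp (n (S_T φ(p)/T - δ) - C)`; taking
`(1/n) log` and `limsup` gives the claim, the error `C/n` vanishing in the limit.
-/

open Filter Finset Function Real

theorem Function.IsPeriodicPt.exists_abs_birkhoffSum_sub_le {α : Type*} {g : α → α} {p : α}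
    {T : ℕ} (hp : IsPeriodicPt g T p) (hT : 0 < T) (φ : α → ℝ) :
    ∃ C, ∀ i n : ℕ, |birkhoffSum g φ n (g^[i] p) - n * (birkhoffSum g φ T p / T)| ≤ C := by
  set S := birkhoffSum g φ T p
  have hT' : (T : ℝ) ≠ 0 := by positivity
  -- The defect `h` is `T`-periodic because a full period contributes exactly `S`.
  set h : ℕ → ℝ := fun m => birkhoffSum g φ m p - m * (S / T)
  have hper : Periodic h T := fun m => by
    simp only [h, add_comm m T, birkhoffSum_add, hp.eq]
    push_cast
    field_simp
    ring
  have hbound : ∀ m, |h m| ≤ ∑ k ∈ range T, |h k| := fun m =>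
    hper.map_mod_nat m ▸ single_le_sum (fun k _ => abs_nonneg (h k)) (mem_range.2 (m.mod_lt hT))
  refine ⟨2 * ∑ k ∈ range T, |h k|, fun i n => ?_⟩
  have hdiff : birkhoffSum g φ n (g^[i] p) - n * (S / T) = h (i + n) - h i := by
    simp only [h, birkhoffSum_add]
    push_cast
    ring
  rw [hdiff]
  linarith [abs_sub (h (i + n)) (h i), hbound (i + n), hbound i]

theorem Function.IsPeriodicPt.exists_le_birkhoffSum_of_shadow {α : Type*} {g : α → α} {p : α}
    {T : ℕ} (hp : IsPeriodicPt g T p) (hT : 0 < T) {φ : α → ℝ} {δ : ℝ}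
    (hshadow : ∀ x, ∃ i, ∀ j : ℕ, |φ (g^[j] x) - φ (g^[i + j] p)| ≤ δ) :
    ∃ C, ∀ x n, n * (birkhoffSum g φ T p / T - δ) - C ≤ birkhoffSum g φ n x := by
  obtain ⟨C, hC⟩ := hp.exists_abs_birkhoffSum_sub_le hT φ
  refine ⟨C, fun x n => ?_⟩
  obtain ⟨i, hi⟩ := hshadow x
  have hterm : birkhoffSum g φ n (g^[i] p) - n * δ ≤ birkhoffSum g φ n x := by
    simp only [birkhoffSum, ← iterate_add_apply, add_comm _ i]
    have := sum_le_sum fun j (_ : j ∈ range n) => (abs_le.1 (hi j)).1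
    simp only [sum_sub_distrib, sum_const, card_range, nsmul_eq_mul] at this
    linarith
  linarith [(abs_le.1 (hC i n)).1]

theorem exists_finset_forall_dist_iterate_lt {K : Type*} [PseudoMetricSpace K] [CompactSpace K]
    {g : K → K} (hg : Continuous g) {ε : ℝ} (hε : 0 < ε) (n : ℕ) :
    ∃ E : Finset K, ∀ y, ∃ x ∈ E, ∀ j < n, dist (g^[j] y) (g^[j] x) < ε := by
  obtain ⟨E, hE⟩ := Dynamics.exists_isDynCoverOf_of_isCompact_uniformContinuous isCompact_univ
    (CompactSpace.uniformContinuous_of_continuous hg) (Metric.dist_mem_uniformity hε) n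
  refine ⟨E, fun y => ?_⟩
  obtain ⟨x, hx, hyx⟩ := hE (Set.mem_univ y)
  exact ⟨x, hx, Dynamics.mem_dynEntourage.1 hyx⟩

theorem log_sInf_card_add_le_log_sInf_sum_exp {ι : Type*} {P : Finset ι → Prop}
    (hP : ∃ E, P E) (hne : ∀ E, P E → E.Nonempty) {w : ι → ℝ} {b : ℝ} (hb : ∀ x, b ≤ w x) :
    log ((sInf {m : ℕ | ∃ E, P E ∧ E.card = m} : ℕ) : ℝ) + b
      ≤ log (sInf {c : ℝ | ∃ E, P E ∧ c = ∑ x ∈ E, exp (w x)}) := by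
  set r := sInf {m : ℕ | ∃ E, P E ∧ E.card = m}
  obtain ⟨E₀, hE₀, hr⟩ : r ∈ {m : ℕ | ∃ E, P E ∧ E.card = m} :=
    Nat.sInf_mem (hP.elim fun E hE => ⟨_, E, hE, rfl⟩)
  have hr_pos : (0 : ℝ) < r := by
    rw [← hr]
    exact_mod_cast (hne E₀ hE₀).card_pos
  have hle : r * exp b ≤ sInf {c : ℝ | ∃ E, P E ∧ c = ∑ x ∈ E, exp (w x)} := by
    refine le_csInf (hP.elim fun E hE => ⟨_, E, hE, rfl⟩) ?_
    rintro c ⟨E, hE, rfl⟩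
    calc (r : ℝ) * exp b ≤ E.card * exp b := by
          gcongr
          exact Nat.sInf_le ⟨E, hE, rfl⟩
      _ = ∑ _x ∈ E, exp b := by rw [sum_const, nsmul_eq_mul]
      _ ≤ ∑ x ∈ E, exp (w x) := sum_le_sum fun x _ => exp_le_exp.2 (hb x)
  calc log r + b = log (r * exp b) := by rw [log_mul hr_pos.ne' (exp_pos b).ne', log_exp]
    _ ≤ _ := log_le_log (by positivity) hle

theorem EReal.limsup_add_le_of_tendsto {α : Type*} {f : Filter α} [f.NeBot] {u v w : α → EReal}
    {c : EReal} (hv : Tendsto v f (nhds c)) (h : ∀ᶠ x in f, u x + v x ≤ w x) :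
    limsup u f + c ≤ limsup w f :=
  hv.liminf_eq ▸ EReal.le_limsup_add.trans (limsup_le_limsup h)

theorem stmt_2_general {K : Type*} [MetricSpace K] [CompactSpace K] [Nonempty K]
    (g : K → K) (hg : Continuous g) (φ : K → ℝ)
    (p : K) (T : ℕ) (hT : 1 ≤ T) (hp : g^[T] p = p) (δ : ℝ)
    (hshadow : ∀ x : K, ∃ i < T, ∀ j : ℕ, |φ (g^[j] x) - φ (g^[i + j] p)| ≤ δ)
    (r : ℕ → ℝ → ℕ)
    (hr : ∀ n ε, r n ε = sInf {m : ℕ | ∃ E : Finset K,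
        (∀ y : K, ∃ x ∈ E, ∀ j < n, dist (g^[j] y) (g^[j] x) < ε) ∧ E.card = m})
    (Q : ℕ → ℝ → ℝ)
    (hQ : ∀ n ε, Q n ε = sInf {c : ℝ | ∃ E : Finset K,
        (∀ y : K, ∃ x ∈ E, ∀ j < n, dist (g^[j] y) (g^[j] x) < ε) ∧
        c = ∑ x ∈ E, Real.exp (∑ j ∈ Finset.range n, φ (g^[j] x))}) :
    ∀ ε : ℝ, 0 < ε →
      Filter.limsup (fun n : ℕ => (((1 / (n : ℝ)) * Real.log (r n ε) : ℝ) : EReal))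
          Filter.atTop
        + (((1 / (T : ℝ)) * ∑ j ∈ Finset.range T, φ (g^[j] p) - δ : ℝ) : EReal)
      ≤ Filter.limsup (fun n : ℕ => (((1 / (n : ℝ)) * Real.log (Q n ε) : ℝ) : EReal))
          Filter.atTop := by
  intro ε hε
  obtain ⟨C, hC⟩ := IsPeriodicPt.exists_le_birkhoffSum_of_shadow (φ := φ) hp hT
    fun x => (hshadow x).imp fun _ hi => hi.2
  set c := 1 / (T : ℝ) * ∑ j ∈ range T, φ (g^[j] p) - δ
  have hc : birkhoffSum g φ T p / T - δ = c := by rw [birkhoffSum, div_eq_inv_mul, ← one_div]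
  have hlog : ∀ n : ℕ, log (r n ε) + (n * c - C) ≤ log (Q n ε) := fun n => by
    rw [hr, hQ]
    exact log_sInf_card_add_le_log_sInf_sum_exp (exists_finset_forall_dist_iterate_lt hg hε n)
      (fun E hE => (hE (Classical.arbitrary K)).elim fun x hx => ⟨x, hx.1⟩)
      fun x => hc ▸ hC x n
  refine EReal.limsup_add_le_of_tendsto (v := fun n : ℕ => ((c - C * (1 / n) : ℝ) : EReal))
    (EReal.tendsto_coe.2 ?_) ?_
  · simpa using tendsto_one_div_atTop_nhds_zero_nat.const_mul C |>.const_sub c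
  · filter_upwards [eventually_gt_atTop 0] with n hn
    rw [← EReal.coe_add, EReal.coe_le_coe_iff]
    have hn' : (n : ℝ) ≠ 0 := Nat.cast_ne_zero.2 hn.ne'
    calc 1 / (n : ℝ) * log (r n ε) + (c - C * (1 / n))
        = 1 / n * (log (r n ε) + (n * c - C)) := by field_simp
      _ ≤ 1 / n * log (Q n ε) := by gcongr; exact hlog n

/-- On a nonempty compact metric space, if every orbit shadows
the periodic orbit of `p` up to a `δ`-error in the values of `φ`, then the
pressure-type quantity `limsup (1/n) log Q_n(ε)` dominates
`limsup (1/n) log r_n(ε) + (1/T)·S_Tφ(p)/T − δ`, where `r_n(ε)` is the minimal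
cardinality of an `(n,ε)`-spanning set and `Q_n(ε)` the infimum of the
exponential Birkhoff weights over `(n,ε)`-spanning sets. -/
theorem stmt_2 {K : Type*} [MetricSpace K] [CompactSpace K] [Nonempty K]
    (g : K → K) (hg : Continuous g) (φ : K → ℝ) (hφ : Continuous φ)
    (p : K) (T : ℕ) (hT : 1 ≤ T) (hp : g^[T] p = p) (δ : ℝ) (hδ : 0 < δ)
    (hshadow : ∀ x : K, ∃ i < T, ∀ j : ℕ, |φ (g^[j] x) - φ (g^[i + j] p)| ≤ δ)
    (r : ℕ → ℝ → ℕ)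
    (hr : ∀ n ε, r n ε = sInf {m : ℕ | ∃ E : Finset K,
        (∀ y : K, ∃ x ∈ E, ∀ j < n, dist (g^[j] y) (g^[j] x) < ε) ∧ E.card = m})
    (Q : ℕ → ℝ → ℝ)
    (hQ : ∀ n ε, Q n ε = sInf {c : ℝ | ∃ E : Finset K,
        (∀ y : K, ∃ x ∈ E, ∀ j < n, dist (g^[j] y) (g^[j] x) < ε) ∧
        c = ∑ x ∈ E, Real.exp (∑ j ∈ Finset.range n, φ (g^[j] x))}) :
    ∀ ε : ℝ, 0 < ε →
      Filter.limsup (fun n : ℕ => (((1 / (n : ℝ)) * Real.log (r n ε) : ℝ) : EReal))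
          Filter.atTop
        + (((1 / (T : ℝ)) * ∑ j ∈ Finset.range T, φ (g^[j] p) - δ : ℝ) : EReal)
      ≤ Filter.limsup (fun n : ℕ => (((1 / (n : ℝ)) * Real.log (Q n ε) : ℝ) : EReal))
          Filter.atTop :=
  stmt_2_general g hg φ p T hT hp δ hshadow r hr Q hQ
end

section
/- Let E be a real normed vector space, G : E → E a linear map, C > 0, λ ∈ (0,1), and r ≥ max(1, 2λ/(C(1−λ²))). Let u_s, u_u ∈ E, u = u_s + u_u, with ‖u‖ ≥ r and ‖u_s‖ ≤ ((1 − λ/(C·r))/(1+λ²))·‖u‖. Assume that for every n ≥ 0 one has ‖G^n(u_s)‖ ≤ C·λ^n·‖u_s‖ and ‖G^n(u_u)‖ ≥ C·λ^{−n}·‖u_u‖. Then ‖G^n(u)‖ ≥ 1 for every n ≥ 0. -/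
/-! For `n ≥ 1` the unstable part of `Gⁿ u` has norm at least `(C/λ)‖u_u‖` and the stable part at
most `Cλ‖u_s‖`, so `‖Gⁿ u‖ ≥ (C/λ)‖u‖ - C(λ + 1/λ)‖u_s‖`. The bound on `‖u_s‖` is chosen exactly
so that the right-hand side is at least `‖u‖ / r ≥ 1`. -/

theorem norm_add_ge_of_le_mul_of_mul_le {E : Type*} [SeminormedAddCommGroup E]
    {s t s' t' : E} {a b : ℝ} (ha : 0 ≤ a)
    (hs : ‖s'‖ ≤ b * ‖s‖) (ht : a * ‖t‖ ≤ ‖t'‖) :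
    a * ‖s + t‖ - (a + b) * ‖s‖ ≤ ‖s' + t'‖ := by
  have hst : ‖s + t‖ - ‖s‖ ≤ ‖t‖ := by linarith [norm_add_le s t]
  have hrev : ‖t'‖ ≤ ‖s' + t'‖ + ‖s'‖ := by simpa using norm_sub_le (s' + t') s'
  linarith [mul_le_mul_of_nonneg_left hst ha]

theorem one_le_sub_of_le_stable_fraction {C l r x y : ℝ} (hC : 0 < C) (hl : 0 < l)
    (hrx : r ≤ x) (hr : 0 < r) (hy : y ≤ ((1 - l / (C * r)) / (1 + l ^ 2)) * x) :
    1 ≤ C / l * x - (C / l + C * l) * y := by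
  have hcoef : (C / l + C * l) * ((1 - l / (C * r)) / (1 + l ^ 2)) = C / l - 1 / r := by
    field_simp
  have hy' : (C / l + C * l) * y ≤ (C / l - 1 / r) * x := by
    rw [← hcoef, mul_assoc]
    exact mul_le_mul_of_nonneg_left hy (by positivity)
  have hx : 1 ≤ 1 / r * x := by rwa [one_div_mul_eq_div, one_le_div₀ hr]
  linarith

/-- Hyperbolic growth estimate: a vector `u = u_s + u_u` of
norm at least `r` whose stable component is a sufficiently small fraction of
its norm never re-enters the unit ball under forward iteration of the linear
map `G`, given uniform contraction `C·λ^n` on the stable component and uniform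
expansion `C·λ^{−n}` on the unstable component. -/
theorem stmt_4 {E : Type*} [NormedAddCommGroup E] [NormedSpace ℝ E]
    (G : E → E) (hG : IsLinearMap ℝ G) (C l r : ℝ) (hC : 0 < C)
    (hl : l ∈ Set.Ioo (0 : ℝ) 1) (hr : max 1 (2 * l / (C * (1 - l ^ 2))) ≤ r)
    (us uu u : E) (hu : u = us + uu) (hunorm : r ≤ ‖u‖)
    (hs : ‖us‖ ≤ ((1 - l / (C * r)) / (1 + l ^ 2)) * ‖u‖)
    (hcontr : ∀ n : ℕ, ‖G^[n] us‖ ≤ C * l ^ n * ‖us‖)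
    (hexp : ∀ n : ℕ, C * l ^ (-(n : ℤ)) * ‖uu‖ ≤ ‖G^[n] uu‖) :
    ∀ n : ℕ, 1 ≤ ‖G^[n] u‖ := by
  obtain ⟨hl0, hl1⟩ := hl
  have hr1 : 1 ≤ r := (le_max_left _ _).trans hr
  rintro (_ | n)
  · simpa using hr1.trans hunorm
  have hpow : l ^ (n + 1) ≤ l := pow_le_of_le_one hl0.le hl1.le n.succ_ne_zero
  have hstable : ‖G^[n + 1] us‖ ≤ C * l * ‖us‖ :=
    (hcontr _).trans (by gcongr)
  have hunstable : C / l * ‖uu‖ ≤ ‖G^[n + 1] uu‖ := by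
    refine le_trans ?_ (hexp _)
    rw [zpow_neg, zpow_natCast, div_eq_mul_inv]
    gcongr
  have hsplit := norm_add_ge_of_le_mul_of_mul_le (by positivity) hstable hunstable
  have hadd : G^[n + 1] (us + uu) = G^[n + 1] us + G^[n + 1] uu :=
    iterate_map_add (hG.mk' G) _ _ _
  rw [← hadd, ← hu] at hsplit
  exact (one_le_sub_of_le_stable_fraction hC hl0 hunorm (by linarith) hs).trans hsplit
end

section
/- Let X be a Baire topological space and F : X → ℝ a function. Suppose that for every rational number α the set U_α := int{x ∈ X : F(x) > α} ∪ int{x ∈ X : F(x) < α} is dense in X (int denoting topological interior). Then there exists a dense G_δ subset S of X such that F is continuous at every point of S; indeed one may take S = ⋂_{α∈ℚ} U_α. -/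
/-! At a point of `⋂_{α ∈ ℚ} (int{F > α} ∪ int{F < α})` the value `F x` is, for each rational `α`,
kept strictly on its side of `α` in a whole neighbourhood of `x`; as the rationals are order-dense
in `ℝ`, this is continuity at `x`. The intersection is a countable intersection of dense open sets,
hence a dense `G_δ` by Baire's theorem. -/

open Filter Set

theorem continuousAt_of_forall_mem_interior_lt_union_interior_gt {X Y ι : Type*}
    [TopologicalSpace X] [LinearOrder Y] [TopologicalSpace Y] [OrderTopology Y]
    {F : X → Y} {q : ι → Y} (hq : ∀ a b, a < b → ∃ i, a < q i ∧ q i < b) {x : X}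
    (hx : ∀ i, x ∈ interior {y | q i < F y} ∪ interior {y | F y < q i}) :
    ContinuousAt F x := by
  rw [ContinuousAt, tendsto_order]
  constructor
  · intro b hb
    obtain ⟨i, hbi, hiF⟩ := hq b (F x) hb
    have hxi : x ∈ interior {y | q i < F y} :=
      (hx i).resolve_right fun h => (interior_subset h : x ∈ {y | F y < q i}).asymm hiF
    filter_upwards [mem_interior_iff_mem_nhds.mp hxi] with y hy using hbi.trans hy
  · intro b hb
    obtain ⟨i, hFi, hib⟩ := hq (F x) b hb
    have hxi : x ∈ interior {y | F y < q i} :=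
      (hx i).resolve_left fun h => (interior_subset h : x ∈ {y | q i < F y}).asymm hFi
    filter_upwards [mem_interior_iff_mem_nhds.mp hxi] with y hy using lt_trans hy hib

/-- If, for every rational `α`, the union of the interiors of
`{F > α}` and `{F < α}` is dense in the Baire space `X`, then `F` has a dense
`G_δ` set of continuity points; indeed one may take
`S = ⋂_{α ∈ ℚ} (int{F > α} ∪ int{F < α})`. -/
theorem stmt_5 {X : Type*} [TopologicalSpace X] [BaireSpace X] (F : X → ℝ)
    (h : ∀ α : ℚ,
      Dense (interior {x : X | (α : ℝ) < F x} ∪ interior {x : X | F x < (α : ℝ)})) :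
    ∃ S : Set X,
      (S = ⋂ α : ℚ,
        (interior {x : X | (α : ℝ) < F x} ∪ interior {x : X | F x < (α : ℝ)})) ∧
      Dense S ∧ IsGδ S ∧ ∀ x ∈ S, ContinuousAt F x := by
  have hopen : ∀ α : ℚ,
      IsOpen (interior {x : X | (α : ℝ) < F x} ∪ interior {x : X | F x < (α : ℝ)}) :=
    fun _ => isOpen_interior.union isOpen_interior
  refine ⟨_, rfl, dense_iInter_of_isOpen hopen h, .iInter_of_isOpen hopen, fun x hx => ?_⟩
  exact continuousAt_of_forall_mem_interior_lt_union_interior_gt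
    (fun _ _ hab => exists_rat_btwn hab) (mem_iInter.mp hx)
end

section
/- Let U be a topological space, f₀ ∈ U, and a : ℕ → U → ℝ a family of functions such that (i) for every g ∈ U the sequence (a_n(g))_{n≥1} is subadditive, i.e. a_{m+n}(g) ≤ a_m(g) + a_n(g) for all m,n ≥ 1, and (ii) for every n ≥ 1 the function g ↦ a_n(g) is continuous at f₀. Assume σ(f₀) := inf_{n≥1} a_n(f₀)/n is finite. Then for every α > 0 there exist an integer N₁ ≥ 1 and a neighborhood V of f₀ such that for every g ∈ V and every n ≥ N₁: a_n(g) ≤ (σ(f₀) + α)·n. -/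
/-!
Pick `m ≥ 1` with `a_m(f₀) / m < s := σ + α/2`. By continuity at `f₀`, for `g` near `f₀` we have
`a_m(g) < m s` and the finitely many values `a_r(g) - r s`, `r < m`, stay below a constant `C`.
Writing `n = k m + r`, subadditivity gives `a_n(g) ≤ k a_m(g) + a_r(g) ≤ n s + C` uniformly in such
`g`, and `n s + C ≤ (σ + α) n` once `n ≥ 2C/α`.
-/

open Filter Topology

lemma subadditive_ite_zero {u : ℕ → ℝ} (h : ∀ m n, 1 ≤ m → 1 ≤ n → u (m + n) ≤ u m + u n) :
    Subadditive fun n => if n = 0 then 0 else u n := by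
  intro m n
  rcases Nat.eq_zero_or_pos m with rfl | hm
  · simp
  rcases Nat.eq_zero_or_pos n with rfl | hn
  · simp
  simpa [hm.ne', hn.ne'] using h m n hm hn

lemma Subadditive.le_mul_add {u : ℕ → ℝ} (h : Subadditive u) {m : ℕ} (hm : m ≠ 0) {s C : ℝ}
    (hum : u m ≤ m * s) (hC : ∀ r < m, u r - r * s ≤ C) (n : ℕ) : u n ≤ n * s + C := by
  obtain ⟨k, r, hr, rfl⟩ : ∃ k r, r < m ∧ n = k * m + r :=
    ⟨n / m, n % m, Nat.mod_lt _ (Nat.pos_of_ne_zero hm), (Nat.div_add_mod' n m).symm⟩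
  calc u (k * m + r) ≤ k * u m + u r := h.apply_mul_add_le k m r
    _ ≤ k * (m * s) + (r * s + C) := by gcongr; linarith [hC r hr]
    _ = ((k * m + r : ℕ) : ℝ) * s + C := by push_cast; ring

lemma Subadditive.exists_eventually_le_mul_add {U : Type*} [TopologicalSpace U] {u : U → ℕ → ℝ}
    {f₀ : U} (hsub : ∀ g, Subadditive (u g)) (hcont : ∀ n, ContinuousAt (u · n) f₀) {m : ℕ}
    (hm : m ≠ 0) {s : ℝ} (hs : u f₀ m < m * s) :
    ∃ C, ∀ᶠ g in 𝓝 f₀, ∀ n, u g n ≤ n * s + C := by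
  obtain ⟨C, hC⟩ := ((Finset.range m).image fun r => u f₀ r - r * s + 1).exists_le
  have hum : ∀ᶠ g in 𝓝 f₀, u g m < m * s := (hcont m).eventually_lt continuousAt_const hs
  have hur : ∀ᶠ g in 𝓝 f₀, ∀ r ∈ Finset.range m, u g r < u f₀ r + 1 :=
    (eventually_all_finset _).2 fun r _ =>
      (hcont r).eventually_lt continuousAt_const (lt_add_one _)
  refine ⟨C, ?_⟩
  filter_upwards [hum, hur] with g hgm hgr
  refine (hsub g).le_mul_add hm hgm.le fun r hr => ?_
  have hr' := Finset.mem_range.2 hr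
  linarith [hgr r hr', hC _ (Finset.mem_image_of_mem _ hr')]

/-- Upper semicontinuity, uniform in large times, of the
exponential growth rate `σ = inf_{n≥1} a_n(f₀)/n` of a subadditive family
depending continuously on a parameter. -/
theorem stmt_7 {U : Type*} [TopologicalSpace U] (f₀ : U) (a : ℕ → U → ℝ)
    (hsub : ∀ g : U, ∀ m n : ℕ, 1 ≤ m → 1 ≤ n → a (m + n) g ≤ a m g + a n g)
    (hcont : ∀ n : ℕ, 1 ≤ n → ContinuousAt (a n) f₀)
    (σ : ℝ) (hσ : IsGLB {x : ℝ | ∃ n : ℕ, 1 ≤ n ∧ x = a n f₀ / n} σ) :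
    ∀ α : ℝ, 0 < α → ∃ N₁ : ℕ, 1 ≤ N₁ ∧ ∃ V ∈ nhds f₀,
      ∀ g ∈ V, ∀ n : ℕ, N₁ ≤ n → a n g ≤ (σ + α) * n := by
  intro α hα
  set u : U → ℕ → ℝ := fun g n => if n = 0 then 0 else a n g
  have hu_cont : ∀ n, ContinuousAt (u · n) f₀ := fun n => by
    rcases Nat.eq_zero_or_pos n with rfl | hn
    · simpa [u] using continuousAt_const
    · simpa [u, hn.ne'] using hcont n hn
  obtain ⟨_, ⟨m, hm, rfl⟩, -, hlt⟩ := hσ.exists_between (by linarith : σ < σ + α / 2)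
  have hs : u f₀ m < m * (σ + α / 2) := by
    simpa [u, Nat.one_le_iff_ne_zero.1 hm, mul_comm] using (div_lt_iff₀ (by positivity)).1 hlt
  obtain ⟨C, hC⟩ := Subadditive.exists_eventually_le_mul_add
    (fun g => subadditive_ite_zero (hsub g)) hu_cont (by omega) hs
  obtain ⟨N, hN⟩ := exists_nat_ge (2 * C / α)
  refine ⟨N + 1, by omega, _, hC, fun g hg n hn => ?_⟩
  have hCn : 2 * C ≤ α * n := by
    rw [div_le_iff₀ hα] at hN
    nlinarith [(by exact_mod_cast hn : (N : ℝ) + 1 ≤ n)]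
  have hgn : a n g ≤ n * (σ + α / 2) + C := by simpa [u, show n ≠ 0 by omega] using hg n
  linarith
end

section
/- Let X be a compact metric space, μ a Borel probability measure on X, and (ν_k)_{k∈ℕ} a sequence of Borel probability measures on X such that (i) for every continuous φ : X → ℝ, ∫ φ dν_k → ∫ φ dμ as k → ∞, and (ii) for every k there is a closed set K_k ⊆ X with ν_k(X∖K_k) = 0 and μ(K_k) = 0. Then the set U := {φ ∈ C(X,ℝ) : there exists k with ∫ φ dν_k > ∫ φ dμ} is open and dense in C(X,ℝ) with the uniform (sup-norm) topology. -/
/-!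
Integration against a finite measure is Lipschitz on `C(X, ℝ)`, which gives openness. For density,
given `φ`, pick `k` with `∫ φ dν_k` close to `∫ φ dμ` and add `(r/2) • g`, where `g` is an Urysohn
function equal to `1` on `K_k` and supported in an open neighbourhood of `K_k` of `μ`-measure `< 1/2`
(outer regularity and `μ K_k = 0`). This raises `∫ dν_k` by `r/2` but `∫ dμ` by less than `r/4`.
-/

open MeasureTheory Set

namespace ContinuousMap

variable {X : Type*} [TopologicalSpace X] [CompactSpace X] [MeasurableSpace X]
  [OpensMeasurableSpace X] (ρ : Measure X) [IsFiniteMeasure ρ]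

theorem integrable (f : C(X, ℝ)) : Integrable f ρ :=
  (BoundedContinuousFunction.mkOfCompact f).integrable ρ

theorem lipschitzWith_integral :
    LipschitzWith (ρ univ).toNNReal (fun f : C(X, ℝ) => ∫ x, f x ∂ρ) := by
  refine LipschitzWith.of_dist_le_mul fun f g => ?_
  rw [dist_eq_norm, dist_eq_norm, ← integral_sub (f.integrable ρ) (g.integrable ρ)]
  have h := (BoundedContinuousFunction.mkOfCompact (f - g)).norm_integral_le_mul_norm ρ
  rw [BoundedContinuousFunction.norm_mkOfCompact] at h
  simpa [measureReal_def, ENNReal.coe_toNNReal_eq_toReal] using h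

theorem continuous_integral : Continuous (fun f : C(X, ℝ) => ∫ x, f x ∂ρ) :=
  (lipschitzWith_integral ρ).continuous

theorem integral_add_smul (f g : C(X, ℝ)) (c : ℝ) :
    ∫ x, (f + c • g) x ∂ρ = ∫ x, f x ∂ρ + c * ∫ x, g x ∂ρ := by
  simp only [add_apply, smul_apply, smul_eq_mul]
  rw [integral_add (f.integrable ρ) ((g.integrable ρ).const_mul c), integral_const_mul]

end ContinuousMap

theorem isOpen_setOf_exists_integral_lt {X : Type*} [TopologicalSpace X] [CompactSpace X]
    [MeasurableSpace X] [OpensMeasurableSpace X] {ι : Type*}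
    (μ : Measure X) [IsFiniteMeasure μ] (ν : ι → Measure X) [∀ k, IsFiniteMeasure (ν k)] :
    IsOpen {φ : C(X, ℝ) | ∃ k, ∫ x, φ x ∂μ < ∫ x, φ x ∂(ν k)} := by
  simp only [ofPred_exists]
  exact isOpen_iUnion fun k =>
    isOpen_lt (ContinuousMap.continuous_integral μ) (ContinuousMap.continuous_integral (ν k))

theorem exists_continuous_eqOn_one_integral_lt {X : Type*} [TopologicalSpace X]
    [CompactSpace X] [NormalSpace X] [MeasurableSpace X] [OpensMeasurableSpace X]
    (μ : Measure X) [IsFiniteMeasure μ] [μ.OuterRegular] {K : Set X} (hK : IsClosed K)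
    (hμK : μ K = 0) {δ : ℝ} (hδ : 0 < δ) :
    ∃ g : C(X, ℝ), EqOn g 1 K ∧ (∀ x, g x ∈ Icc (0 : ℝ) 1) ∧ ∫ x, g x ∂μ < δ := by
  obtain ⟨U, hKU, hU, hμU⟩ :=
    K.exists_isOpen_lt_of_lt (μ := μ) (ENNReal.ofReal δ) (by simpa [hμK] using hδ)
  obtain ⟨g, hg0, hg1, hg01⟩ := exists_continuous_zero_one_of_isClosed hU.isClosed_compl hK
    (disjoint_compl_left_iff_subset.2 hKU)
  refine ⟨g, hg1, hg01, ?_⟩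
  have hg_le : ∀ x, g x ≤ U.indicator 1 x := by
    intro x
    by_cases hx : x ∈ U
    · simpa [hx] using (hg01 x).2
    · simp [hx, hg0 hx]
  calc ∫ x, g x ∂μ ≤ ∫ x, U.indicator 1 x ∂μ :=
        integral_mono (g.integrable μ) ((integrable_const 1).indicator hU.measurableSet) hg_le
    _ = μ.real U := integral_indicator_one hU.measurableSet
    _ < δ := ENNReal.toReal_lt_of_lt_ofReal hμU

theorem integral_eq_one_of_eqOn_one {X : Type*} [MeasurableSpace X] (ν : Measure X)
    [IsProbabilityMeasure ν] {K : Set X} (hνK : ν Kᶜ = 0) {g : X → ℝ} (hg : EqOn g 1 K) :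
    ∫ x, g x ∂ν = 1 := by
  have : g =ᵐ[ν] fun _ => 1 := Filter.mem_of_superset (mem_ae_iff.2 hνK) hg
  simp [integral_congr_ae this]

theorem dense_setOf_exists_integral_lt {X : Type*} [TopologicalSpace X] [CompactSpace X]
    [NormalSpace X] [MeasurableSpace X] [OpensMeasurableSpace X]
    (μ : Measure X) [IsFiniteMeasure μ] [μ.OuterRegular]
    {ι : Type*} {l : Filter ι} [l.NeBot] (ν : ι → Measure X) [∀ k, IsProbabilityMeasure (ν k)]
    (hconv : ∀ φ : C(X, ℝ), Filter.Tendsto (fun k => ∫ x, φ x ∂(ν k)) l (nhds (∫ x, φ x ∂μ)))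
    (K : ι → Set X) (hK : ∀ k, IsClosed (K k)) (hνK : ∀ k, ν k (K k)ᶜ = 0)
    (hμK : ∀ k, μ (K k) = 0) :
    Dense {φ : C(X, ℝ) | ∃ k, ∫ x, φ x ∂μ < ∫ x, φ x ∂(ν k)} := by
  rw [Metric.dense_iff]
  intro φ r hr
  obtain ⟨k, hk⟩ := ((hconv φ).eventually
    (lt_mem_nhds (by linarith : ∫ x, φ x ∂μ - r / 4 < ∫ x, φ x ∂μ))).exists
  obtain ⟨g, hg1, hg01, hgμ⟩ :=
    exists_continuous_eqOn_one_integral_lt μ (hK k) (hμK k) one_half_pos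
  have hgν : ∫ x, g x ∂(ν k) = 1 := integral_eq_one_of_eqOn_one (ν k) (hνK k) hg1
  have hg_norm : ‖g‖ ≤ 1 := (ContinuousMap.norm_le _ zero_le_one).2 fun x =>
    abs_le.2 ⟨by linarith [(hg01 x).1], (hg01 x).2⟩
  refine ⟨φ + (r / 2) • g, ?_, k, ?_⟩
  · rw [Metric.mem_ball, dist_eq_norm, add_sub_cancel_left, norm_smul,
      Real.norm_of_nonneg (by positivity)]
    nlinarith
  · rw [ContinuousMap.integral_add_smul, ContinuousMap.integral_add_smul, hgν]
    nlinarith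

/-- If a Borel probability measure `μ` on a compact metric
space is weakly approximated by Borel probability measures `ν_k`, each carried
by a closed set of `μ`-measure zero, then the set of continuous potentials `φ`
for which some `∫ φ dν_k` exceeds `∫ φ dμ` is open and dense in `C(X,ℝ)`. -/
theorem stmt_11 {X : Type*} [MetricSpace X] [CompactSpace X]
    [MeasurableSpace X] [BorelSpace X]
    (μ : Measure X) [IsProbabilityMeasure μ]
    (ν : ℕ → Measure X) [∀ k, IsProbabilityMeasure (ν k)]
    (hconv : ∀ φ : C(X, ℝ), Filter.Tendsto (fun k : ℕ => ∫ x, φ x ∂(ν k))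
      Filter.atTop (nhds (∫ x, φ x ∂μ)))
    (K : ℕ → Set X) (hKcl : ∀ k, IsClosed (K k))
    (hνK : ∀ k, (ν k) (K k)ᶜ = 0) (hμK : ∀ k, μ (K k) = 0) :
    IsOpen {φ : C(X, ℝ) | ∃ k : ℕ, (∫ x, φ x ∂μ) < ∫ x, φ x ∂(ν k)} ∧
    Dense {φ : C(X, ℝ) | ∃ k : ℕ, (∫ x, φ x ∂μ) < ∫ x, φ x ∂(ν k)} :=
  ⟨isOpen_setOf_exists_integral_lt μ ν,
    dense_setOf_exists_integral_lt μ ν hconv K hKcl hνK hμK⟩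
end
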